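/- arXiv:1410.7320 — 4 statements merged into one kernel-verified Lean document; each statement's English description precedes it below -/
import Mathlib

section
/- Let X ⊂ P^{n+1} be a hypersurface of degree d ≥ 2 and dimension n ≥ 2 over F_q. If the number of F_q-points of X equals Θ_n^{d,q} = (d-1)q^n + dq^{n-1} + q^{n-2} + ... + q + 1, then d ≤ q + 1; moreover d = q + 1 holds if and only if N_q(X) = N_q(P^{n+1}), i.e., X is a space-filling hypersurface. -/
/-!
Since `X` is a subset of `ℙⁿ⁺¹(𝔽_q)`, we have `Θ_n^{d,q} = N_q(X) ≤ N_q(ℙⁿ⁺¹) = 1 + q + ⋯ + qⁿ⁺¹`, and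
the difference of the two sides factors as `qⁿ⁻¹ (q + 1) (q + 1 - d)`. Hence `d ≤ q + 1`, with
equality exactly when `X` contains every rational point.
-/

open Finset

def theta (d q n : ℕ) : ℕ :=
  (d - 1) * q ^ n + d * q ^ (n - 1) + ∑ i ∈ range (n - 1), q ^ i

theorem theta_add_eq_geom_sum {d q n : ℕ} (hd : 1 ≤ d) (hn : 1 ≤ n) :
    (theta d q n : ℤ) + q ^ (n - 1) * (q + 1) * (q + 1 - d) = ∑ i ∈ range (n + 2), (q : ℤ) ^ i := by
  obtain ⟨m, rfl⟩ : ∃ m, n = m + 1 := ⟨n - 1, by omega⟩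
  simp only [theta, Nat.add_sub_cancel, sum_range_succ]
  push_cast [Nat.cast_sub hd]
  ring

section

variable {d q n : ℕ} (hd : 1 ≤ d) (hn : 1 ≤ n) (hq : 0 < q)
include hd hn hq

theorem theta_le_geom_sum_iff : theta d q n ≤ ∑ i ∈ range (n + 2), q ^ i ↔ d ≤ q + 1 := by
  have h := theta_add_eq_geom_sum (q := q) hd hn
  have hpos : (0 : ℤ) < q ^ (n - 1) * (q + 1) := by positivity
  zify
  rw [← h, le_add_iff_nonneg_right, mul_nonneg_iff_of_pos_left hpos, sub_nonneg]

theorem theta_eq_geom_sum_iff : theta d q n = ∑ i ∈ range (n + 2), q ^ i ↔ d = q + 1 := by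
  have h := theta_add_eq_geom_sum (q := q) hd hn
  have hpos : (0 : ℤ) < q ^ (n - 1) * (q + 1) := by positivity
  zify
  rw [← h, left_eq_add, mul_eq_zero_iff_left hpos.ne', sub_eq_zero, eq_comm]

end

theorem stmt2_general (q d n : ℕ) (hn : 2 ≤ n) (hd : 2 ≤ d)
    (K : Type*) [Field K] [Fintype K] (hK : Fintype.card K = q)
    (P : MvPolynomial (Fin (n + 2)) K)
    (hNX : Nat.card {x : Projectivization K (Fin (n + 2) → K) |
        MvPolynomial.eval x.rep P = 0} =
      (d - 1) * q ^ n + d * q ^ (n - 1) + ∑ i ∈ Finset.range (n - 1), q ^ i) :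
    d ≤ q + 1 ∧
      (d = q + 1 ↔
        Nat.card {x : Projectivization K (Fin (n + 2) → K) |
            MvPolynomial.eval x.rep P = 0} =
          Nat.card (Projectivization K (Fin (n + 2) → K))) := by
  have hcard : Nat.card (Projectivization K (Fin (n + 2) → K)) = ∑ i ∈ range (n + 2), q ^ i := by
    rw [Projectivization.card_of_finrank K _ (Module.finrank_fin_fun K), Nat.card_eq_fintype_card, hK]
  have hq : 0 < q := hK ▸ Fintype.card_pos
  change _ = theta d q n at hNX
  have hsub : theta d q n ≤ ∑ i ∈ range (n + 2), q ^ i := by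
    rw [← hNX, ← hcard]
    exact Finite.card_subtype_le _
  rw [hNX, hcard]
  exact ⟨(theta_le_geom_sum_iff (by omega) (by omega) hq).1 hsub,
    (theta_eq_geom_sum_iff (by omega) (by omega) hq).symm⟩

/-- if `N_q(X) = Θ_n^{d,q}` then `d ≤ q+1`, with `d = q+1` iff `X` is
space filling. -/
theorem stmt2 (q d n : ℕ) (hq : IsPrimePow q) (hn : 2 ≤ n) (hd : 2 ≤ d)
    (K : Type*) [Field K] [Fintype K] (hK : Fintype.card K = q)
    (P : MvPolynomial (Fin (n + 2)) K) (hP : P.IsHomogeneous d) (hP0 : P ≠ 0)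
    (hNX : Nat.card {x : Projectivization K (Fin (n + 2) → K) |
        MvPolynomial.eval x.rep P = 0} =
      (d - 1) * q ^ n + d * q ^ (n - 1) + ∑ i ∈ Finset.range (n - 1), q ^ i) :
    d ≤ q + 1 ∧
      (d = q + 1 ↔
        Nat.card {x : Projectivization K (Fin (n + 2) → K) |
            MvPolynomial.eval x.rep P = 0} =
          Nat.card (Projectivization K (Fin (n + 2) → K))) :=
  stmt2_general q d n hn hd K hK P hNX
end

section
/- Let F ∈ F_q[X_0,...,X_{n+1}] be a homogeneous polynomial of degree d ≤ q that vanishes at every F_q-point of P^{n+1} (equivalently, at every point of F_q^{n+2}). Then F is the zero polynomial. -/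
/-- a homogeneous polynomial of degree `d ≤ q` vanishing at every point of
`F_q^{n+2}` is the zero polynomial. -/
theorem stmt8 (q d n : ℕ) (K : Type*) [Field K] [Fintype K] (hK : Fintype.card K = q)
    (F : MvPolynomial (Fin (n + 2)) K) (hF : F.IsHomogeneous d) (hdq : d ≤ q)
    (hvan : ∀ x : Fin (n + 2) → K, MvPolynomial.eval x F = 0) :
    F = 0 :=
  hF.eq_zero_of_forall_eval_eq_zero_of_le_card hvan <| by
    rw [Cardinal.mk_fintype, hK]
    exact_mod_cast hdq
end

section
/- Let F ∈ F_q[X_0,...,X_{n+1}] be a homogeneous polynomial of degree q+1 that vanishes at every point of F_q^{n+2}. Then there exists an (n+2)×(n+2) matrix A over F_q with A^T = −A such that F(X) = X · A · (X_0^q, ..., X_{n+1}^q)^T, i.e., F = Σ_{i<j} a_{ij}(X_i X_j^q − X_i^q X_j). -/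
/-!
Write `q = #K`. Since `x ^ q = x` on `K`, lowering every positive exponent of a polynomial to its
representative in `{1, …, q - 1}` modulo `q - 1` does not change the function it defines on
`K^σ`. The lowered polynomial has degree `< q` in each variable, so if `F` vanishes on `K^σ` it is
zero: the coefficients of `F` along each fibre of this reduction of monomials sum to zero. For
monomials of degree `q + 1` the fibres are `{m}` when all exponents are `< q`, `{X_k^(q+1)}`, and
`{X_i X_j^q, X_j X_i^q}` for `i ≠ j`. Hence only the monomials `X_i X_j^q` with `i ≠ j` occur in
`F`, with antisymmetric coefficients.
-/

open Finsupp

universe u v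

/-- For `e > 0` this is the representative of `e` modulo `q - 1` in `{1, …, q - 1}`, so that
`x ^ e = x ^ reduceExp q e` for every `x` in a field with `q` elements. -/
def reduceExp (q e : ℕ) : ℕ := if e = 0 then 0 else (e - 1) % (q - 1) + 1

lemma reduceExp_zero (q : ℕ) : reduceExp q 0 = 0 := rfl

lemma reduceExp_eq_zero_iff {q e : ℕ} : reduceExp q e = 0 ↔ e = 0 := by
  unfold reduceExp; split <;> omega

lemma reduceExp_le_self (q e : ℕ) : reduceExp q e ≤ e := by
  unfold reduceExp; split
  · omega
  · have := Nat.mod_le (e - 1) (q - 1); omega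

lemma reduceExp_le_sub_one {q : ℕ} (hq : 2 ≤ q) (e : ℕ) : reduceExp q e ≤ q - 1 := by
  unfold reduceExp; split
  · omega
  · have := Nat.mod_lt (e - 1) (show 0 < q - 1 by omega); omega

lemma reduceExp_of_le {q e : ℕ} (he : e ≤ q - 1) : reduceExp q e = e := by
  unfold reduceExp; split
  · omega
  · rw [Nat.mod_eq_of_lt (by omega)]; omega

lemma reduceExp_self {q : ℕ} (hq : q ≠ 0) : reduceExp q q = 1 := by
  simp [reduceExp, hq]

lemma eq_one_or_eq_of_reduceExp_eq_one {q e : ℕ} (h : reduceExp q e = 1) (he : e ≤ q) :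
    e = 1 ∨ e = q := by
  unfold reduceExp at h; split at h
  · omega
  · rcases Nat.lt_or_ge (e - 1) (q - 1) with hlt | hge
    · rw [Nat.mod_eq_of_lt hlt] at h; omega
    · omega

lemma pow_reduceExp {K : Type*} [Field K] [Fintype K] {q : ℕ} (hK : Fintype.card K = q)
    (x : K) (e : ℕ) : x ^ reduceExp q e = x ^ e := by
  rcases eq_or_ne e 0 with rfl | he
  · rfl
  rcases eq_or_ne x 0 with rfl | hx
  · rw [zero_pow (reduceExp_eq_zero_iff.not.mpr he), zero_pow he]
  · have hdiv := Nat.div_add_mod (e - 1) (q - 1)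
    conv_rhs => rw [show e = (q - 1) * ((e - 1) / (q - 1)) + reduceExp q e by
      simp only [reduceExp, if_neg he]; omega]
    rw [pow_add, pow_mul, ← hK, FiniteField.pow_card_sub_one_eq_one x hx, one_pow, one_mul]

namespace Finsupp

lemma eq_of_le_of_degree_eq {σ : Type*} {m m' : σ →₀ ℕ} (hle : m ≤ m')
    (hdeg : m.degree = m'.degree) : m = m' := by
  have h0 : (m' - m).degree = 0 := by
    have := congrArg degree (add_tsub_cancel_of_le hle)
    rw [map_add] at this; omega
  rw [degree_eq_zero_iff, tsub_eq_zero_iff_le] at h0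
  exact le_antisymm hle h0

lemma single_add_single_injective {σ : Type*} {q : ℕ} (hq : 2 ≤ q) :
    Function.Injective fun ij : σ × σ => single ij.1 1 + single ij.2 q := by
  rintro ⟨i, j⟩ ⟨i', j'⟩ h
  rcases (single_add_single_eq_single_add_single one_ne_zero (by omega)).mp h with
    ⟨rfl, rfl⟩ | ⟨h1, -⟩ | ⟨h1, -⟩ <;> first | rfl | omega

lemma exists_eq_single_add_single_of_degree_eq {σ : Type*} {q : ℕ} {m : σ →₀ ℕ}
    (hm : m.degree = q + 1) {k : σ} (hk : q ≤ m k) : ∃ i j, m = single i 1 + single j q := by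
  have hle : single k q ≤ m := single_le_iff.mpr hk
  have hrest : (m - single k q).degree = 1 := by
    have := congrArg degree (tsub_add_cancel_of_le hle)
    rw [map_add, degree_single] at this
    omega
  obtain ⟨i, hi⟩ : m - single k q ∈ Set.range fun a => single a 1 :=
    range_single_one ▸ hrest
  exact ⟨i, k, (tsub_add_cancel_of_le hle).symm.trans (by rw [← hi])⟩

end Finsupp

section Monomial

variable {σ : Type*}

noncomputable def reduceMonomial (q : ℕ) (m : σ →₀ ℕ) : σ →₀ ℕ :=
  mapRange (reduceExp q) (reduceExp_zero q) m

lemma reduceMonomial_apply (q : ℕ) (m : σ →₀ ℕ) (k : σ) :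
    reduceMonomial q m k = reduceExp q (m k) :=
  mapRange_apply

lemma reduceMonomial_le (q : ℕ) (m : σ →₀ ℕ) : reduceMonomial q m ≤ m :=
  fun k => (reduceMonomial_apply q m k).trans_le (reduceExp_le_self q (m k))

lemma reduceMonomial_eq_self {q : ℕ} {m : σ →₀ ℕ} (hm : ∀ k, m k ≤ q - 1) :
    reduceMonomial q m = m :=
  ext fun k => (reduceMonomial_apply q m k).trans (reduceExp_of_le (hm k))

lemma reduceMonomial_single (q : ℕ) (k : σ) (e : ℕ) :
    reduceMonomial q (single k e) = single k (reduceExp q e) :=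
  mapRange_single

lemma reduceMonomial_single_add_single (q : ℕ) {i j : σ} (hij : i ≠ j) (a b : ℕ) :
    reduceMonomial q (single i a + single j b) =
      single i (reduceExp q a) + single j (reduceExp q b) := by
  classical
  ext k
  simp only [reduceMonomial_apply, Finsupp.add_apply, single_apply]
  split_ifs <;> simp_all [reduceExp_zero]

end Monomial

namespace MvPolynomial

variable {σ R : Type*} [CommSemiring R]

lemma IsHomogeneous.degree_eq_of_mem_support {p : MvPolynomial σ R} {n : ℕ}
    (hp : p.IsHomogeneous n) {m : σ →₀ ℕ} (hm : m ∈ p.support) : m.degree = n := by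
  rw [degree_apply]
  exact (hp.degree_eq_sum_deg_support hm).symm

noncomputable def reducePowers (q : ℕ) (p : MvPolynomial σ R) : MvPolynomial σ R :=
  ∑ m ∈ p.support, monomial (reduceMonomial q m) (coeff m p)

lemma coeff_reducePowers [DecidableEq σ] (q : ℕ) (p : MvPolynomial σ R) (μ : σ →₀ ℕ) :
    coeff μ (reducePowers q p) = ∑ m ∈ p.support with reduceMonomial q m = μ, coeff m p := by
  simp only [reducePowers, coeff_sum, coeff_monomial, Finset.sum_filter]

lemma reducePowers_mem_restrictDegree {q : ℕ} (hq : 2 ≤ q) (p : MvPolynomial σ R) :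
    reducePowers q p ∈ restrictDegree σ R (q - 1) :=
  Submodule.sum_mem _ fun m _ => (mem_restrictDegree _ _ _).mpr fun s hs k => by
    rw [(support_monomial_subset hs : s ∈ {reduceMonomial q m}) |> Finset.mem_singleton.mp,
      reduceMonomial_apply]
    exact reduceExp_le_sub_one hq _

lemma eval_reducePowers {K : Type*} [Field K] [Fintype K] {q : ℕ} (hK : Fintype.card K = q)
    (p : MvPolynomial σ K) (x : σ → K) : eval x (reducePowers q p) = eval x p := by
  conv_rhs => rw [p.as_sum]
  simp only [reducePowers, map_sum, eval_monomial]
  refine Finset.sum_congr rfl fun m _ => congrArg _ ?_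
  rw [reduceMonomial, prod_mapRange_index fun _ => pow_zero _]
  exact prod_congr fun k _ => pow_reduceExp hK (x k) (m k)

/-- `MvPolynomial.eq_zero_of_eval_eq_zero` with the variables and the field in independent
universes. -/
theorem eq_zero_of_eval_eq_zero' {σ : Type u} {K : Type v} [Field K] [Fintype K] [Finite σ]
    (p : MvPolynomial σ K) (h : ∀ v : σ → K, eval v p = 0)
    (hp : p ∈ restrictDegree σ K (Fintype.card K - 1)) : p = 0 := by
  have : Small.{u} K := Countable.toSmall K
  let φ : Shrink.{u} K ≃+* K := Shrink.ringEquiv K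
  let _ : Fintype (Shrink.{u} K) := .ofEquiv K φ.symm
  suffices map (φ.symm : K →+* Shrink.{u} K) p = 0 from
    map_injective _ φ.symm.injective (this.trans (map_zero _).symm)
  refine eq_zero_of_eval_eq_zero σ (Shrink.{u} K) _ (fun v => φ.injective ?_) ?_
  · rw [eval_map, map_zero, ← RingEquiv.coe_toRingHom, eval₂_comp_left]
    simpa using h (φ ∘ v)
  · rw [mem_restrictDegree, support_map_of_injective _ φ.symm.injective,
      Fintype.card_congr φ.toEquiv]
    exact (mem_restrictDegree _ _ _).mp hp

theorem reducePowers_eq_zero {K : Type*} [Field K] [Fintype K] [Finite σ] {q : ℕ}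
    (hK : Fintype.card K = q) {p : MvPolynomial σ K} (h : ∀ x : σ → K, eval x p = 0) :
    reducePowers q p = 0 := by
  refine eq_zero_of_eval_eq_zero' _ (fun x => (eval_reducePowers hK p x).trans (h x)) ?_
  rw [hK]
  exact reducePowers_mem_restrictDegree (hK ▸ Fintype.one_lt_card) p

theorem sum_coeff_eq_zero_of_reduceMonomial_fiber {K : Type*} [Field K] [Fintype K]
    [Finite σ] {q : ℕ} (hK : Fintype.card K = q) {p : MvPolynomial σ K}
    (h : ∀ x : σ → K, eval x p = 0) (s : Finset (σ →₀ ℕ)) (μ : σ →₀ ℕ)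
    (hs : ∀ m ∈ s, reduceMonomial q m = μ)
    (hfib : ∀ m ∈ p.support, reduceMonomial q m = μ → m ∈ s) :
    ∑ m ∈ s, coeff m p = 0 := by
  classical
  have hsub : {m ∈ p.support | reduceMonomial q m = μ} ⊆ s := fun m hm =>
    hfib m (Finset.mem_filter.mp hm).1 (Finset.mem_filter.mp hm).2
  calc ∑ m ∈ s, coeff m p = ∑ m ∈ p.support with reduceMonomial q m = μ, coeff m p :=
        (Finset.sum_subset hsub fun m hms hm => notMem_support_iff.mp fun hsupp =>
          hm (Finset.mem_filter.mpr ⟨hsupp, hs m hms⟩)).symm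
    _ = coeff μ (reducePowers q p) := (coeff_reducePowers q p μ).symm
    _ = 0 := by rw [reducePowers_eq_zero hK h, coeff_zero]

section

variable {K : Type*} [Field K] [Fintype K] [Finite σ] {q : ℕ} (hK : Fintype.card K = q)
  {p : MvPolynomial σ K} (hp : p.IsHomogeneous (q + 1)) (h : ∀ x : σ → K, eval x p = 0)

include hK hp h

theorem coeff_eq_zero_of_forall_le_sub_one {μ : σ →₀ ℕ} (hμ : ∀ k, μ k ≤ q - 1) :
    coeff μ p = 0 := by
  classical
  by_cases hdeg : μ.degree = q + 1
  swap
  · exact hp.coeff_eq_zero hdeg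
  refine (Finset.sum_singleton _ _).symm.trans <| sum_coeff_eq_zero_of_reduceMonomial_fiber hK h
    {μ} μ (by simpa using reduceMonomial_eq_self hμ) fun m hm hmμ => Finset.mem_singleton.mpr ?_
  have hred : reduceMonomial q m = m :=
    eq_of_le_of_degree_eq (reduceMonomial_le q m)
      (by rw [hmμ, hdeg, hp.degree_eq_of_mem_support hm])
  exact hred.symm.trans hmμ

theorem coeff_single_add_single_self_eq_zero (k : σ) : coeff (single k 1 + single k q) p = 0 := by
  classical
  rw [← single_add, add_comm]
  refine (Finset.sum_singleton _ _).symm.trans <| sum_coeff_eq_zero_of_reduceMonomial_fiber hK h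
    {single k (q + 1)} (single k (reduceExp q (q + 1)))
    (fun m hm => Finset.mem_singleton.mp hm ▸ reduceMonomial_single q k (q + 1))
    fun m hm hmμ => Finset.mem_singleton.mpr ?_
  have hsupp : m.support ⊆ {k} := by
    intro l hl
    by_contra hlk
    have : reduceExp q (m l) = 0 := by
      rw [← reduceMonomial_apply, hmμ, single_eq_of_ne (Finset.notMem_singleton.mp hlk)]
    exact Finsupp.mem_support_iff.mp hl (reduceExp_eq_zero_iff.mp this)
  obtain ⟨b, rfl⟩ := support_subset_singleton'.mp hsupp
  rw [← hp.degree_eq_of_mem_support hm, degree_single]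

theorem coeff_add_coeff_swap_eq_zero_of_ne {i j : σ} (hij : i ≠ j) :
    coeff (single i 1 + single j q) p + coeff (single j 1 + single i q) p = 0 := by
  classical
  have hq : 2 ≤ q := hK ▸ Fintype.one_lt_card
  have hne : single i 1 + single j q ≠ single j 1 + single i q := fun heq =>
    hij (congrArg Prod.fst (single_add_single_injective hq heq : (i, j) = (j, i)))
  refine (Finset.sum_pair hne).symm.trans <| sum_coeff_eq_zero_of_reduceMonomial_fiber hK h
    _ (single i 1 + single j 1) ?_ fun m hm hmμ => ?_
  · simp only [Finset.mem_insert, Finset.mem_singleton]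
    rintro m (rfl | rfl)
    · rw [reduceMonomial_single_add_single q hij, reduceExp_of_le (by omega),
        reduceExp_self (by omega)]
    · rw [reduceMonomial_single_add_single q hij.symm, reduceExp_of_le (by omega),
        reduceExp_self (by omega), add_comm]
  have hred : ∀ k, reduceExp q (m k) = (single i 1 + single j 1 : σ →₀ ℕ) k := fun k => by
    rw [← reduceMonomial_apply, hmμ]
  have hm_eq : m = single i (m i) + single j (m j) := by
    ext k
    by_cases hki : k = i
    · subst hki; simp [hij]
    by_cases hkj : k = j
    · subst hkj; simp [hij]
    have hk := hred k
    rw [Finsupp.add_apply, single_eq_of_ne hki, single_eq_of_ne hkj, add_zero,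
      reduceExp_eq_zero_iff] at hk
    rw [Finsupp.add_apply, single_eq_of_ne hki, single_eq_of_ne hkj, hk, add_zero]
  have hsum : m i + m j = q + 1 := by
    rw [← hp.degree_eq_of_mem_support hm, hm_eq, map_add, degree_single, degree_single]
    simp [hij, hij.symm]
  have hri : reduceExp q (m i) = 1 := by simpa [single_apply, hij] using hred i
  have hrj : reduceExp q (m j) = 1 := by simpa [single_apply, hij.symm] using hred j
  have hj0 : m j ≠ 0 := fun h0 => by simp [h0, reduceExp_zero] at hrj
  simp only [Finset.mem_insert, Finset.mem_singleton]
  rcases eq_one_or_eq_of_reduceExp_eq_one hri (by omega) with hi | hi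
  · left; rw [hm_eq, hi, show m j = q by omega]
  · right; rw [hm_eq, hi, show m j = 1 by omega, add_comm]

theorem coeff_add_coeff_swap_eq_zero (i j : σ) :
    coeff (single i 1 + single j q) p + coeff (single j 1 + single i q) p = 0 := by
  rcases eq_or_ne i j with rfl | hij
  · rw [coeff_single_add_single_self_eq_zero hK hp h, add_zero]
  · exact coeff_add_coeff_swap_eq_zero_of_ne hK hp h hij

theorem exists_eq_single_add_single_of_mem_support {m : σ →₀ ℕ} (hm : m ∈ p.support) :
    ∃ i j, m = single i 1 + single j q := by
  by_cases hbig : ∃ k, q ≤ m k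
  · obtain ⟨k, hk⟩ := hbig
    exact exists_eq_single_add_single_of_degree_eq (hp.degree_eq_of_mem_support hm) hk
  · simp only [not_exists, not_le] at hbig
    exact absurd (coeff_eq_zero_of_forall_le_sub_one hK hp h fun k => by have := hbig k; omega)
      (mem_support_iff.mp hm)

end

lemma C_mul_X_mul_X_pow_eq_monomial (c : R) (i j : σ) (q : ℕ) :
    C c * X i * X j ^ q = monomial (single i 1 + single j q) c := by
  rw [X_pow_eq_monomial, X, C_mul_monomial, mul_one, monomial_mul, mul_one]

theorem eq_sum_C_mul_X_mul_X_pow {K : Type*} [Field K] [Fintype K] [Fintype σ] {q : ℕ}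
    (hK : Fintype.card K = q) {p : MvPolynomial σ K} (hp : p.IsHomogeneous (q + 1))
    (h : ∀ x : σ → K, eval x p = 0) :
    p = ∑ i, ∑ j, C (coeff (single i 1 + single j q) p) * X i * X j ^ q := by
  classical
  set g : σ × σ → σ →₀ ℕ := fun ij => single ij.1 1 + single ij.2 q
  calc p = ∑ m ∈ p.support, monomial m (coeff m p) := p.as_sum
    _ = ∑ m ∈ Finset.univ.image g, monomial m (coeff m p) := by
        refine Finset.sum_subset (fun m hm => ?_) fun m _ hm => by
          rw [notMem_support_iff.mp hm, monomial_zero]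
        obtain ⟨i, j, rfl⟩ := exists_eq_single_add_single_of_mem_support hK hp h hm
        exact Finset.mem_image_of_mem g (Finset.mem_univ (i, j))
    _ = ∑ ij, monomial (g ij) (coeff (g ij) p) :=
        Finset.sum_image fun _ _ _ _ hab =>
          single_add_single_injective (hK ▸ Fintype.one_lt_card) hab
    _ = _ := by simp only [g, Fintype.sum_prod_type, C_mul_X_mul_X_pow_eq_monomial]

end MvPolynomial

open Matrix MvPolynomial Finsupp

/-- a homogeneous polynomial of degree `q+1` vanishing at every point of
`F_q^{n+2}` has the form `F = X A (X^q)ᵗ = Σ_{i,j} a_{ij} X_i X_j^q` for an alternating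
matrix `A` (`Aᵀ = -A` and zero diagonal). -/
theorem stmt9 (q n : ℕ) (K : Type*) [Field K] [Fintype K] (hK : Fintype.card K = q)
    (F : MvPolynomial (Fin (n + 2)) K) (hF : F.IsHomogeneous (q + 1))
    (hvan : ∀ x : Fin (n + 2) → K, MvPolynomial.eval x F = 0) :
    ∃ A : Matrix (Fin (n + 2)) (Fin (n + 2)) K, Aᵀ = -A ∧ (∀ i, A i i = 0) ∧
      F = ∑ i, ∑ j, MvPolynomial.C (A i j) * MvPolynomial.X i * MvPolynomial.X j ^ q := by
  refine ⟨Matrix.of fun i j => coeff (single i 1 + single j q) F, ?_,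
    coeff_single_add_single_self_eq_zero hK hF hvan, eq_sum_C_mul_X_mul_X_pow hK hF hvan⟩
  ext i j
  exact eq_neg_of_add_eq_zero_left (coeff_add_coeff_swap_eq_zero hK hF hvan j i)
end

section
/- Let Γ be a plane curve of degree d over F_q such that every F_q-line meets Γ(F_q) in 0, 1, or d points, and suppose N_q(Γ) = (d-1)q + 1. Then counting lines meeting Γ(F_q) gives C(N_q(Γ),2)/C(d,2) + N_q(Γ) ≤ q² + q + 1, which forces d² − 2d − (q−1) ≤ 0, hence d ≤ √q + 1. -/
set_option linter.unusedSectionVars false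
set_option linter.unnecessarySimpa false
set_option linter.unusedVariables false

open Projectivization Module


section counting
variable {α β : Type*}

lemma aux_card_sigma_const {ι : Type*} [Finite ι] {f : ι → Type*} [∀ i, Finite (f i)] {c : ℕ}
    (h : ∀ i, Nat.card (f i) = c) : Nat.card ((i : ι) × f i) = Nat.card ι * c := by
  classical
  cases nonempty_fintype ι
  letI : ∀ i, Fintype (f i) := fun i => Fintype.ofFinite (f i)
  have h' : ∀ i, Fintype.card (f i) = c := fun i => by
    rw [← Nat.card_eq_fintype_card, h]
  rw [Nat.card_eq_fintype_card, Nat.card_eq_fintype_card, Fintype.card_sigma]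
  simp [h', Finset.sum_const, mul_comm]

lemma aux_card_fiber [Finite α] [Finite β] (f : α → β) {c : ℕ}
    (h : ∀ y, Nat.card {x // f x = y} = c) : Nat.card α = Nat.card β * c := by
  rw [← Nat.card_congr (Equiv.sigmaFiberEquiv f)]
  exact aux_card_sigma_const h

lemma aux_double_count [Finite α] [Finite β] (r : α → β → Prop) {a b : ℕ}
    (ha : ∀ x, Nat.card {y // r x y} = a) (hb : ∀ y, Nat.card {x // r x y} = b) :
    Nat.card α * a = Nat.card β * b := by
  classical
  have h1 : Nat.card {p : α × β // r p.1 p.2} = Nat.card α * a := by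
    rw [Nat.card_congr (Equiv.subtypeProdEquivSigmaSubtype r)]
    exact aux_card_sigma_const ha
  have h2 : Nat.card {p : α × β // r p.1 p.2} = Nat.card β * b := by
    have e : {p : α × β // r p.1 p.2} ≃ {p : β × α // r p.2 p.1} :=
      (Equiv.prodComm α β).subtypeEquiv (fun p => Iff.rfl)
    rw [Nat.card_congr (e.trans (Equiv.subtypeProdEquivSigmaSubtype fun y x => r x y))]
    exact aux_card_sigma_const hb
  rw [← h1, h2]

lemma aux_card_ne [Finite α] (x : α) : Nat.card {y // y ≠ x} = Nat.card α - 1 := by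
  classical
  cases nonempty_fintype α
  rw [Nat.card_eq_fintype_card, Nat.card_eq_fintype_card,
    Fintype.card_subtype_compl (fun y => y = x), Fintype.card_subtype_eq]

lemma aux_two_le_card [Finite α] {x y : α} (h : x ≠ y) : 2 ≤ Nat.card α := by
  classical
  cases nonempty_fintype α
  rw [Nat.card_eq_fintype_card]
  exact Fintype.one_lt_card_iff_nontrivial.2 ⟨x, y, h⟩

end counting

section proj
variable (K : Type*) [Field K] [Fintype K] (V : Type*) [AddCommGroup V] [Module K V] [Finite V]

instance aux_proj_finite : Finite (Projectivization K V) := Quotient.finite _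

lemma aux_proj_card :
    Nat.card (Projectivization K V) * (Fintype.card K - 1) = Nat.card V - 1 := by
  classical
  have key : ∀ x : Projectivization K V,
      Nat.card {v : {v : V // v ≠ 0} // Projectivization.mk' K v = x} = Fintype.card K - 1 := by
    intro x
    have e : Kˣ ≃ {v : {v : V // v ≠ 0} // Projectivization.mk' K v = x} := by
      refine Equiv.ofBijective
        (fun u => ⟨⟨(u : K) • x.rep, smul_ne_zero u.ne_zero x.rep_nonzero⟩, ?_⟩) ⟨?_, ?_⟩
      · rw [Projectivization.mk'_eq_mk]
        conv_rhs => rw [← x.mk_rep]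
        rw [Projectivization.mk_eq_mk_iff]
        exact ⟨u, rfl⟩
      · intro u u' huu
        have h2 : (u : K) • x.rep = (u' : K) • x.rep := congrArg (fun z => z.1.1) huu
        exact Units.ext (smul_left_injective K x.rep_nonzero h2)
      · rintro ⟨⟨v, hv⟩, hmk⟩
        rw [Projectivization.mk'_eq_mk, ← x.mk_rep, Projectivization.mk_eq_mk_iff] at hmk
        obtain ⟨a, ha⟩ := hmk
        exact ⟨a, Subtype.ext (Subtype.ext (by simpa [Units.smul_def] using ha))⟩
    rw [← Nat.card_congr e, Nat.card_eq_fintype_card, Fintype.card_units]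
  have h1 := aux_card_fiber (Projectivization.mk' K (V := V)) key
  rw [aux_card_ne (0 : V)] at h1
  rw [← h1]

lemma aux_proj_card_two (h : finrank K V = 2) (q : ℕ) (hK : Fintype.card K = q) :
    Nat.card (Projectivization K V) = q + 1 := by
  classical
  have := Fintype.ofFinite V
  have hV : Nat.card V = q ^ 2 := by
    rw [Nat.card_eq_fintype_card, card_eq_pow_finrank (K := K), h, hK]
  have h1 := aux_proj_card K V
  rw [hV, hK] at h1
  have hq : 2 ≤ q := hK ▸ Fintype.one_lt_card
  have h2 : (q + 1) * (q - 1) = q ^ 2 - 1 := by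
    cases' Nat.exists_eq_add_of_le hq with k hk
    subst hk
    rw [show 2 + k - 1 = k + 1 by omega]
    symm
    apply Nat.sub_eq_of_eq_add
    ring
  exact Nat.eq_of_mul_eq_mul_right (by omega) (h1.trans h2.symm)

lemma aux_proj_card_three (h : finrank K V = 3) (q : ℕ) (hK : Fintype.card K = q) :
    Nat.card (Projectivization K V) = q ^ 2 + q + 1 := by
  classical
  have := Fintype.ofFinite V
  have hV : Nat.card V = q ^ 3 := by
    rw [Nat.card_eq_fintype_card, card_eq_pow_finrank (K := K), h, hK]
  have h1 := aux_proj_card K V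
  rw [hV, hK] at h1
  have hq : 2 ≤ q := hK ▸ Fintype.one_lt_card
  have h2 : (q ^ 2 + q + 1) * (q - 1) = q ^ 3 - 1 := by
    cases' Nat.exists_eq_add_of_le hq with k hk
    subst hk
    rw [show 2 + k - 1 = k + 1 by omega]
    symm
    apply Nat.sub_eq_of_eq_add
    ring
  exact Nat.eq_of_mul_eq_mul_right (by omega) (h1.trans h2.symm)

end proj

section geom
variable {K : Type*} [Field K] [Fintype K] {V : Type*} [AddCommGroup V] [Module K V] [Finite V]

-- points on a line
lemma aux_points_on (W : Submodule K V) :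
    Nat.card {x : Projectivization K V // x.rep ∈ W} = Nat.card (Projectivization K W) := by
  classical
  symm
  refine Nat.card_congr (Equiv.ofBijective
    (fun y => ⟨Projectivization.map W.subtype (Submodule.injective_subtype W) y, ?_⟩) ⟨?_, ?_⟩)
  · induction y using Projectivization.ind with
    | h w hw =>
      rw [Projectivization.map_mk]
      obtain ⟨a, ha⟩ := Projectivization.exists_smul_eq_mk_rep K (W.subtype w)
        ((Submodule.injective_subtype W).ne_iff' W.subtype.map_zero |>.2 hw)
      rw [← ha]
      exact W.smul_mem _ w.2
  · intro y z h
    exact Projectivization.map_injective (σ := RingHom.id K) (τ := RingHom.id K) W.subtype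
      (Submodule.injective_subtype W) (Subtype.ext_iff.1 h)
  · rintro ⟨x, hx⟩
    refine ⟨Projectivization.mk K (⟨x.rep, hx⟩ : W) (by
      simp only [ne_eq, Submodule.mk_eq_zero]; exact x.rep_nonzero), ?_⟩
    apply Subtype.ext
    simp only
    rw [Projectivization.map_mk]
    exact x.mk_rep
end geom

section geom2
variable {K : Type*} [Field K] [Fintype K] {V : Type*} [AddCommGroup V] [Module K V] [Finite V]

lemma aux_rep_mem_submodule (x : Projectivization K V) : x.rep ∈ x.submodule := by
  rw [Projectivization.submodule_eq]
  exact Submodule.mem_span_singleton_self _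

lemma aux_submodule_le {x : Projectivization K V} {W : Submodule K V} (h : x.rep ∈ W) :
    x.submodule ≤ W := by
  rw [Projectivization.submodule_eq, Submodule.span_singleton_le_iff_mem]
  exact h

-- finrank of comap of mkQ
lemma aux_finrank_comap (p : Submodule K V) (hp : finrank K p = 1)
    (U : Submodule K (V ⧸ p)) :
    finrank K (Submodule.comap p.mkQ U) = finrank K U + 1 := by
  classical
  haveI : FiniteDimensional K V := Module.finite_iff_finite.2 inferInstance
  set W := Submodule.comap p.mkQ U with hW
  have hpW : p ≤ W := fun v hv => by
    have h0 : p.mkQ v = 0 := (Submodule.Quotient.mk_eq_zero p).2 hv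
    simpa [hW, Submodule.mem_comap, h0] using U.zero_mem
  have h1 := LinearMap.finrank_range_add_finrank_ker (p.mkQ.domRestrict W)
  rw [LinearMap.range_domRestrict, LinearMap.ker_domRestrict, Submodule.ker_mkQ] at h1
  have h2 : Submodule.map p.mkQ W = U :=
    Submodule.map_comap_eq_of_surjective (p.mkQ_surjective) U
  have h3 : finrank K (Submodule.comap W.subtype p) = 1 := by
    rw [LinearEquiv.finrank_eq (Submodule.comapSubtypeEquivOfLe hpW)]
    exact hp
  rw [h2, h3] at h1
  exact h1.symm

lemma aux_thru (hV3 : finrank K V = 3) (q : ℕ) (hK : Fintype.card K = q)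
    (x : Projectivization K V) :
    Nat.card {W : Submodule K V // finrank K W = 2 ∧ x.rep ∈ W} = q + 1 := by
  classical
  set p := x.submodule with hp
  have hp1 : finrank K p = 1 := x.finrank_submodule
  haveI : FiniteDimensional K V := Module.finite_iff_finite.2 inferInstance
  haveI : Finite (V ⧸ p) := Quotient.finite _
  have e : {U : Submodule K (V ⧸ p) // finrank K U = 1} ≃
      {W : Submodule K V // finrank K W = 2 ∧ x.rep ∈ W} := by
    refine Equiv.ofBijective (fun U => ⟨Submodule.comap p.mkQ U.1, ?_, ?_⟩) ⟨?_, ?_⟩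
    · rw [aux_finrank_comap p hp1, U.2]
    · have hle : p ≤ Submodule.comap p.mkQ U.1 := fun v hv => by
        have h0 : p.mkQ v = 0 := (Submodule.Quotient.mk_eq_zero p).2 hv
        simpa [Submodule.mem_comap, h0] using U.1.zero_mem
      exact hle (aux_rep_mem_submodule x)
    · intro U U' h
      have h' := congrArg (fun (Z : {W : Submodule K V // finrank K W = 2 ∧ x.rep ∈ W}) =>
        Submodule.map p.mkQ Z.1) h
      simp only [Submodule.map_comap_eq_of_surjective (p.mkQ_surjective)] at h'
      exact Subtype.ext h'
    · rintro ⟨W, hW2, hxW⟩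
      have hpW : p ≤ W := aux_submodule_le hxW
      refine ⟨⟨Submodule.map p.mkQ W, ?_⟩, ?_⟩
      · have hcm : Submodule.comap p.mkQ (Submodule.map p.mkQ W) = W := by
          rw [Submodule.comap_map_eq, Submodule.ker_mkQ, sup_eq_left.2 hpW]
        have := aux_finrank_comap p hp1 (Submodule.map p.mkQ W)
        rw [hcm, hW2] at this
        omega
      · apply Subtype.ext
        simp only
        rw [Submodule.comap_map_eq, Submodule.ker_mkQ, sup_eq_left.2 hpW]
  rw [← Nat.card_congr e, ← Nat.card_congr (Projectivization.equivSubmodule K (V ⧸ p))]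
  apply aux_proj_card_two (K := K) (V := V ⧸ p) _ q hK
  have := Submodule.finrank_quotient_add_finrank p
  rw [hV3, hp1] at this
  omega

end geom2

section geom3
variable {K : Type*} [Field K] [Fintype K] {V : Type*} [AddCommGroup V] [Module K V] [Finite V]

lemma aux_line_finrank (x y : Projectivization K V) (hxy : x ≠ y) :
    finrank K (x.submodule ⊔ y.submodule : Submodule K V) = 2 := by
  haveI : FiniteDimensional K V := Module.finite_iff_finite.2 inferInstance
  have hne : x.submodule ≠ y.submodule := fun h => hxy (Projectivization.submodule_injective h)
  have hinf : x.submodule ⊓ y.submodule = ⊥ := by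
    by_contra hbot
    have h1 : finrank K (x.submodule ⊓ y.submodule : Submodule K V) ≠ 0 := by
      simpa [Submodule.finrank_eq_zero] using hbot
    have hx1 : x.submodule ⊓ y.submodule = x.submodule := by
      apply Submodule.eq_of_le_of_finrank_le inf_le_left
      rw [x.finrank_submodule]; omega
    have hy1 : x.submodule ⊓ y.submodule = y.submodule := by
      apply Submodule.eq_of_le_of_finrank_le inf_le_right
      rw [y.finrank_submodule]; omega
    exact hne (hx1.symm.trans hy1)
  have := Submodule.finrank_sup_add_finrank_inf_eq x.submodule y.submodule
  rw [hinf, x.finrank_submodule, y.finrank_submodule, finrank_bot] at this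
  omega

lemma aux_line_unique {x y : Projectivization K V} (hxy : x ≠ y) {W : Submodule K V}
    (hW : finrank K W = 2) (hx : x.rep ∈ W) (hy : y.rep ∈ W) :
    W = x.submodule ⊔ y.submodule := by
  haveI : FiniteDimensional K V := Module.finite_iff_finite.2 inferInstance
  symm
  apply Submodule.eq_of_le_of_finrank_eq
  · exact sup_le (aux_submodule_le hx) (aux_submodule_le hy)
  · rw [hW, aux_line_finrank x y hxy]

lemma aux_lines_total (hV3 : finrank K V = 3) (q : ℕ) (hK : Fintype.card K = q) :
    Nat.card {W : Submodule K V // finrank K W = 2} = q ^ 2 + q + 1 := by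
  classical
  haveI : Finite (Submodule K V) :=
    Finite.of_injective (fun W => (W : Set V)) SetLike.coe_injective
  have hq : 2 ≤ q := hK ▸ Fintype.one_lt_card
  have hdc := aux_double_count
    (fun (x : Projectivization K V) (W : {W : Submodule K V // finrank K W = 2}) => x.rep ∈ W.1)
    (a := q + 1) (b := q + 1) ?_ ?_
  · have hP3 := aux_proj_card_three (K := K) (V := V) hV3 q hK
    rw [hP3] at hdc
    exact Nat.eq_of_mul_eq_mul_right (by omega) hdc.symm
  · intro x
    rw [Nat.card_congr (Equiv.subtypeSubtypeEquivSubtypeInter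
      (fun W : Submodule K V => finrank K W = 2) (fun W => x.rep ∈ W))]
    exact aux_thru hV3 q hK x
  · intro W
    rw [aux_points_on W.1]
    exact aux_proj_card_two (K := K) (V := W.1) W.2 q hK
end geom3

section key
variable {K : Type*} [Field K] [Fintype K] {V : Type*} [AddCommGroup V] [Module K V] [Finite V]

lemma aux_key (q d : ℕ) (hd : 3 ≤ d) (hV3 : finrank K V = 3) (hK : Fintype.card K = q)
    (pS : Projectivization K V → Prop)
    (hline : ∀ W : Submodule K V, finrank K W = 2 →
      Nat.card {x : Projectivization K V // pS x ∧ x.rep ∈ W} ∈ ({0, 1, d} : Set ℕ))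
    (hN : Nat.card {x : Projectivization K V // pS x} = (d - 1) * q + 1) :
    ((d : ℤ) - 1) ^ 2 ≤ (q : ℤ) := by
  classical
  haveI : Finite (Submodule K V) :=
    Finite.of_injective (fun W => (W : Set V)) SetLike.coe_injective
  have hq2 : 2 ≤ q := hK ▸ Fintype.one_lt_card
  set m : Submodule K V → ℕ :=
    fun W => Nat.card {x : Projectivization K V // pS x ∧ x.rep ∈ W} with hm
  -- any 2-dim subspace with two distinct points of S has exactly d points
  have step0 : ∀ x y : Projectivization K V, pS x → pS y → x ≠ y →
      ∀ W : Submodule K V, finrank K W = 2 → x.rep ∈ W → y.rep ∈ W → m W = d := by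
    intro x y hx hy hxy W hW hxW hyW
    have h2 : 2 ≤ m W := by
      have hne : (⟨x, hx, hxW⟩ : {z : Projectivization K V // pS z ∧ z.rep ∈ W}) ≠
          ⟨y, hy, hyW⟩ := fun h => hxy (Subtype.mk_eq_mk.1 h)
      exact aux_two_le_card hne
    have h' : m W ∈ ({0, 1, d} : Set ℕ) := hline W hW
    simp only [Set.mem_insert_iff, Set.mem_singleton_iff] at h'
    rcases h' with h | h | h
    · omega
    · omega
    · exact h
  -- number of secants through a point of S is q
  have step1 : ∀ x : Projectivization K V, pS x →
      Nat.card {W : Submodule K V // (finrank K W = 2 ∧ m W = d) ∧ x.rep ∈ W} = q := by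
    intro x hx
    set β := {W : Submodule K V // (finrank K W = 2 ∧ m W = d) ∧ x.rep ∈ W} with hβ
    set α := {y : {y : Projectivization K V // pS y} // y.1 ≠ x} with hα
    have hcardα : Nat.card α = (d - 1) * q := by
      have e : α ≃ {y : {y : Projectivization K V // pS y} //
          y ≠ (⟨x, hx⟩ : {y : Projectivization K V // pS y})} :=
        Equiv.subtypeEquivRight (fun y => by
          constructor
          · intro h h'; exact h (by rw [h'])
          · intro h h'; exact h (Subtype.ext h'))
      rw [Nat.card_congr e, aux_card_ne, hN]
      omega
    have hg : ∀ y : α, ((finrank K (x.submodule ⊔ y.1.1.submodule : Submodule K V) = 2 ∧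
        m (x.submodule ⊔ y.1.1.submodule) = d) ∧
        x.rep ∈ (x.submodule ⊔ y.1.1.submodule : Submodule K V)) := by
      intro y
      have hxy : x ≠ y.1.1 := Ne.symm y.2
      have hfr : finrank K (x.submodule ⊔ y.1.1.submodule : Submodule K V) = 2 :=
        aux_line_finrank x y.1.1 hxy
      refine ⟨⟨hfr, ?_⟩, Submodule.mem_sup_left (aux_rep_mem_submodule x)⟩
      exact step0 x y.1.1 hx y.1.2 hxy _ hfr (Submodule.mem_sup_left (aux_rep_mem_submodule x))
        (Submodule.mem_sup_right (aux_rep_mem_submodule y.1.1))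
    set g : α → β := fun y => ⟨x.submodule ⊔ y.1.1.submodule, hg y⟩ with hgdef
    have hfib : ∀ W : β, Nat.card {y : α // g y = W} = d - 1 := by
      intro W
      have e0 : {y : α // g y = W} ≃ {y : α // y.1.1.rep ∈ W.1} := by
        refine Equiv.subtypeEquivRight (fun y => ?_)
        constructor
        · intro h
          have : W.1 = x.submodule ⊔ y.1.1.submodule := by
            rw [← Subtype.ext_iff.1 h]
          rw [this]
          exact Submodule.mem_sup_right (aux_rep_mem_submodule y.1.1)
        · intro h
          apply Subtype.ext
          exact (aux_line_unique (Ne.symm y.2) W.2.1.1 W.2.2 h).symm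
      have e1 : {y : α // y.1.1.rep ∈ W.1} ≃
          {y : {y : Projectivization K V // pS y} // y.1 ≠ x ∧ y.1.rep ∈ W.1} :=
        Equiv.subtypeSubtypeEquivSubtypeInter
          (fun y : {y : Projectivization K V // pS y} => y.1 ≠ x)
          (fun y : {y : Projectivization K V // pS y} => y.1.rep ∈ W.1)
      have e2 : {y : {y : Projectivization K V // pS y} // y.1 ≠ x ∧ y.1.rep ∈ W.1} ≃
          {y : {y : Projectivization K V // pS y} // y.1.rep ∈ W.1 ∧ y.1 ≠ x} :=
        Equiv.subtypeEquivRight (fun y => and_comm)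
      have e3 : {y : {y : Projectivization K V // pS y} // y.1.rep ∈ W.1 ∧ y.1 ≠ x} ≃
          {z : {y : {y : Projectivization K V // pS y} // y.1.rep ∈ W.1} // z.1.1 ≠ x} :=
        (Equiv.subtypeSubtypeEquivSubtypeInter _ _).symm
      have e4 : {z : {y : {y : Projectivization K V // pS y} // y.1.rep ∈ W.1} // z.1.1 ≠ x} ≃
          {z : {y : {y : Projectivization K V // pS y} // y.1.rep ∈ W.1} //
            z ≠ ⟨⟨x, hx⟩, W.2.2⟩} :=
        Equiv.subtypeEquivRight (fun z => by
          constructor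
          · intro h h'; exact h (by rw [h'])
          · intro h h'; exact h (Subtype.ext (Subtype.ext h')))
      rw [Nat.card_congr (((e0.trans e1).trans e2).trans (e3.trans e4)), aux_card_ne]
      have hT : Nat.card {y : {y : Projectivization K V // pS y} // y.1.rep ∈ W.1} = d := by
        rw [Nat.card_congr (Equiv.subtypeSubtypeEquivSubtypeInter pS (fun z => z.rep ∈ W.1))]
        exact W.2.1.2
      rw [hT]
    have hcnt := aux_card_fiber g hfib
    rw [hcardα] at hcnt
    rw [mul_comm (d - 1) q] at hcnt
    exact (Nat.eq_of_mul_eq_mul_right (show 0 < d - 1 by omega) hcnt).symm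
  -- double count: N * q = B * d
  set B := Nat.card {W : Submodule K V // finrank K W = 2 ∧ m W = d} with hB
  have step2 : ((d - 1) * q + 1) * q = B * d := by
    have hdc := aux_double_count
      (fun (y : {y : Projectivization K V // pS y})
        (W : {W : Submodule K V // finrank K W = 2 ∧ m W = d}) => y.1.rep ∈ W.1)
      (a := q) (b := d) ?_ ?_
    · rw [hN] at hdc; exact hdc
    · intro y
      rw [Nat.card_congr (Equiv.subtypeSubtypeEquivSubtypeInter
        (fun W : Submodule K V => finrank K W = 2 ∧ m W = d) (fun W => y.1.rep ∈ W))]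
      exact step1 y.1 y.2
    · intro W
      rw [Nat.card_congr (Equiv.subtypeSubtypeEquivSubtypeInter pS
        (fun z : Projectivization K V => z.rep ∈ W.1))]
      exact W.2.2
  -- tangent line at each point of S
  have step3 : ∀ x : {y : Projectivization K V // pS y},
      ∃ W : Submodule K V, (finrank K W = 2 ∧ x.1.rep ∈ W) ∧ m W = 1 := by
    rintro ⟨x, hx⟩
    by_contra hcon
    push_neg at hcon
    have hall : ∀ W : Submodule K V, (finrank K W = 2 ∧ x.rep ∈ W) →
        (finrank K W = 2 ∧ m W = d) ∧ x.rep ∈ W := by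
      rintro W ⟨hW2, hxW⟩
      have h' : m W ∈ ({0, 1, d} : Set ℕ) := hline W hW2
      simp only [Set.mem_insert_iff, Set.mem_singleton_iff] at h'
      have hpos : 0 < m W := by
        have : Nonempty {z : Projectivization K V // pS z ∧ z.rep ∈ W} := ⟨⟨x, hx, hxW⟩⟩
        exact Nat.card_pos
      have hne1 : m W ≠ 1 := hcon W ⟨hW2, hxW⟩
      refine ⟨⟨hW2, ?_⟩, hxW⟩
      omega
    have e : {W : Submodule K V // finrank K W = 2 ∧ x.rep ∈ W} ≃
        {W : Submodule K V // (finrank K W = 2 ∧ m W = d) ∧ x.rep ∈ W} :=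
      Equiv.subtypeEquivRight (fun W => ⟨fun h => hall W h, fun h => ⟨h.1.1, h.2⟩⟩)
    have h1 : Nat.card {W : Submodule K V // finrank K W = 2 ∧ x.rep ∈ W} = q + 1 :=
      aux_thru hV3 q hK x
    rw [Nat.card_congr e, step1 x hx] at h1
    omega
  choose t ht using step3
  -- injection from points ⊕ secants into lines
  have step4 : (d - 1) * q + 1 + B ≤ q ^ 2 + q + 1 := by
    set L := {W : Submodule K V // finrank K W = 2} with hL
    have hinj : Function.Injective (Sum.elim
        (fun x : {y : Projectivization K V // pS y} => (⟨t x, (ht x).1.1⟩ : L))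
        (fun W : {W : Submodule K V // finrank K W = 2 ∧ m W = d} => (⟨W.1, W.2.1⟩ : L))) := by
      rintro (a | a) (b | b) hab
      · simp only [Sum.elim_inl, Subtype.mk_eq_mk] at hab
        have h1 : m (t a) = 1 := (ht a).2
        rw [Nat.card_eq_one_iff_exists] at h1
        obtain ⟨z, hz⟩ := h1
        have ha : (⟨a.1, a.2, (ht a).1.2⟩ :
            {z : Projectivization K V // pS z ∧ z.rep ∈ t a}) = z := hz _
        have hb : (⟨b.1, b.2, hab ▸ (ht b).1.2⟩ :
            {z : Projectivization K V // pS z ∧ z.rep ∈ t a}) = z := hz _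
        have := ha.trans hb.symm
        exact congrArg Sum.inl (Subtype.ext (Subtype.mk_eq_mk.1 this))
      · simp only [Sum.elim_inl, Sum.elim_inr, Subtype.mk_eq_mk] at hab
        have h1 : m (t a) = 1 := (ht a).2
        rw [hab, b.2.2] at h1
        omega
      · simp only [Sum.elim_inl, Sum.elim_inr, Subtype.mk_eq_mk] at hab
        have h1 : m (t b) = 1 := (ht b).2
        rw [← hab, a.2.2] at h1
        omega
      · simp only [Sum.elim_inr, Subtype.mk_eq_mk] at hab
        exact congrArg Sum.inr (Subtype.ext hab)
    have hle := Nat.card_le_card_of_injective _ hinj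
    rw [Nat.card_sum, hN, aux_lines_total hV3 q hK] at hle
    exact hle
  -- final arithmetic
  have hc1 : ((d : ℤ) - 1) * q + 1 = ((d - 1) * q + 1 : ℕ) := by
    push_cast [Nat.cast_sub (by omega : 1 ≤ d)]
    ring
  have hc2 : (((d - 1) * q + 1) * q : ℕ) = ((B : ℤ) * d) := by exact_mod_cast step2
  have hc3 : (((d - 1) * q + 1 + B : ℕ) : ℤ) ≤ (q : ℤ) ^ 2 + q + 1 := by exact_mod_cast step4
  push_cast at hc2 hc3
  rw [Nat.cast_sub (by omega : 1 ≤ d)] at hc2 hc3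
  push_cast at hc2 hc3
  have hq2' : (2 : ℤ) ≤ q := by exact_mod_cast hq2
  have hd' : (3 : ℤ) ≤ d := by exact_mod_cast hd
  have hB0 : (0 : ℤ) ≤ B := Int.natCast_nonneg B
  have key2 : (q : ℤ) * ((d : ℤ) - 1) ^ 2 ≤ (q : ℤ) * q := by
    nlinarith [mul_le_mul_of_nonneg_left hc3 (by positivity : (0 : ℤ) ≤ (d : ℤ)), hc2]
  exact le_of_mul_le_mul_left key2 (by omega : (0 : ℤ) < q)
end key

/-- if `Γ` is a plane curve of degree `d` over `F_q` such that every
`F_q`-line meets `Γ(F_q)` in `0`, `1` or `d` points, and `N_q(Γ) = (d-1)q + 1`, then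
`C(N_q(Γ),2)/C(d,2) + N_q(Γ) ≤ q² + q + 1`, which forces `d² - 2d - (q-1) ≤ 0`, hence
`d ≤ √q + 1`. -/
theorem stmt17 (q d : ℕ) (hq : IsPrimePow q) (hd : 3 ≤ d)
    (K : Type*) [Field K] [Fintype K] (hK : Fintype.card K = q)
    (P : MvPolynomial (Fin 3) K) (hP : P.IsHomogeneous d) (hP0 : P ≠ 0)
    (hline : ∀ W : Submodule K (Fin 3 → K), Module.finrank K W = 2 →
      Nat.card {x : Projectivization K (Fin 3 → K) |
          MvPolynomial.eval x.rep P = 0 ∧ x.rep ∈ W} ∈ ({0, 1, d} : Set ℕ))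
    (hN : Nat.card {x : Projectivization K (Fin 3 → K) |
        MvPolynomial.eval x.rep P = 0} = (d - 1) * q + 1) :
    ((Nat.choose ((d - 1) * q + 1) 2 : ℚ) / Nat.choose d 2 + ((d - 1) * q + 1) ≤
      (q : ℚ) ^ 2 + q + 1) ∧
    ((d : ℤ) ^ 2 - 2 * d - ((q : ℤ) - 1) ≤ 0) ∧
    ((d : ℝ) ≤ Real.sqrt q + 1) := by
  have hq2 : 2 ≤ q := hK ▸ Fintype.one_lt_card
  have hV3 : Module.finrank K (Fin 3 → K) = 3 := Module.finrank_fin_fun K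
  have hkey : ((d : ℤ) - 1) ^ 2 ≤ (q : ℤ) :=
    aux_key q d hd hV3 hK (fun x => MvPolynomial.eval x.rep P = 0)
      (fun W hW => hline W hW) hN
  have hq2' : (2 : ℚ) ≤ (q : ℚ) := by exact_mod_cast hq2
  have hd' : (3 : ℚ) ≤ (d : ℚ) := by exact_mod_cast hd
  have hkQ : ((d : ℚ) - 1) ^ 2 ≤ (q : ℚ) := by exact_mod_cast hkey
  refine ⟨?_, ?_, ?_⟩
  · have hd1 : (1 : ℕ) ≤ d := by omega
    rw [Nat.cast_choose_two, Nat.cast_choose_two]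
    have hN1 : ((((d - 1) * q + 1 : ℕ)) : ℚ) = ((d : ℚ) - 1) * q + 1 := by
      push_cast [Nat.cast_sub hd1]; ring
    rw [hN1]
    have hd0 : (d : ℚ) ≠ 0 := by linarith
    have hdm1 : (0 : ℚ) < (d : ℚ) - 1 := by linarith
    have hquot : ((((d : ℚ) - 1) * q + 1) * ((((d : ℚ) - 1) * q + 1) - 1) / 2) /
        ((d : ℚ) * ((d : ℚ) - 1) / 2) = (q * (((d : ℚ) - 1) * q + 1)) / d := by
      field_simp
      ring
    rw [hquot, div_add' _ _ _ hd0, div_le_iff₀ (by linarith : (0 : ℚ) < (d : ℚ))]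
    nlinarith [mul_nonneg (by linarith : (0 : ℚ) ≤ (q : ℚ))
      (by linarith [hkQ] : (0 : ℚ) ≤ (q : ℚ) - ((d : ℚ) - 1) ^ 2)]
  · nlinarith [hkey]
  · have hkR : ((d : ℝ) - 1) ^ 2 ≤ (q : ℝ) := by exact_mod_cast hkey
    have h1 : (d : ℝ) - 1 ≤ Real.sqrt q := by
      have h2 := Real.sqrt_le_sqrt hkR
      have hd3 : (3 : ℝ) ≤ (d : ℝ) := by exact_mod_cast hd
      rwa [Real.sqrt_sq (by linarith : (0 : ℝ) ≤ (d : ℝ) - 1)] at h2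
    linarith
end
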